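/- arXiv:1308.1392 — 2 statements merged into one kernel-verified Lean document; each statement's English description precedes it below -/
import Mathlib

section
/- Let M₀ be a closed subspace of H, let p ∈ M₀^⊥, and let ν be a Borel probability measure on B having the law μ_{M_p}. Then ν is concentrated on the closure in B of the affine subspace i(p + M₀): that is, ν(cl_B({i(p + m) : m ∈ M₀})) = 1. -/
/-!
A point `x` outside the closed convex set `cl (i (p + M₀))` is separated from it by a functional
`f < u`. Being bounded above on the affine subspace, `f ∘ i` vanishes on `M₀`, so `j f ⊥ M₀` and the
law of `f` under `ν` has the characteristic function of the Dirac mass at `f (i p) < u`. Thus the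
open half-space `{f > u}` around `x` is `ν`-null, and second countability of `B` turns these local
null sets into `ν (cl (i (p + M₀)))ᶜ = 0`.
-/

open MeasureTheory Complex
open scoped RealInnerProductSpace

theorem LinearMap.eq_zero_of_bddAbove_image_submodule {E : Type*} [AddCommGroup E] [Module ℝ E]
    (f : E →ₗ[ℝ] ℝ) {V : Submodule ℝ E} (hf : BddAbove (f '' V)) {m : E} (hm : m ∈ V) :
    f m = 0 := by
  by_contra hfm
  obtain ⟨b, hb⟩ := hf
  have := hb ⟨((b + 1) / f m) • m, V.smul_mem _ hm, rfl⟩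
  rw [map_smul, smul_eq_mul, div_mul_cancel₀ _ hfm] at this
  linarith

theorem ae_eq_of_charFunDual_smul_eq {E : Type*} [NormedAddCommGroup E] [NormedSpace ℝ E]
    [MeasurableSpace E] [OpensMeasurableSpace E] {ν : Measure E} [IsProbabilityMeasure ν]
    (L : StrongDual ℝ E) (c : ℝ) (h : ∀ t : ℝ, charFunDual ν (t • L) = cexp (t * c * I)) :
    ∀ᵐ x ∂ν, L x = c := by
  have hmap : ν.map L = Measure.dirac c := by
    have := Measure.isProbabilityMeasure_map (μ := ν) L.measurable.aemeasurable
    refine Measure.ext_of_charFun (funext fun t => ?_)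
    rw [charFun_map_eq_charFunDual_smul, h t, charFun_dirac, real_inner_comm]
    simp [mul_comm]
  have hdirac : ∀ᵐ y ∂ν.map L, y = c := by rw [hmap]; simp [ae_dirac_eq]
  exact (ae_map_iff L.measurable.aemeasurable
    (measurableSet_eq_fun measurable_id measurable_const)).1 hdirac

theorem ae_mem_closure_of_forall_ae_le {E : Type*} [TopologicalSpace E] [AddCommGroup E]
    [Module ℝ E] [IsTopologicalAddGroup E] [ContinuousSMul ℝ E] [LocallyConvexSpace ℝ E]
    [SecondCountableTopology E] [MeasurableSpace E] {ν : Measure E} {S : Set E}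
    (hS : Convex ℝ S)
    (h : ∀ (f : StrongDual ℝ E) (u : ℝ), (∀ s ∈ S, f s < u) → ∀ᵐ x ∂ν, f x ≤ u) :
    ∀ᵐ x ∂ν, x ∈ closure S := by
  refine measure_null_of_locally_null _ fun x hx => ?_
  obtain ⟨f, u, hfS, hfx⟩ := geometric_hahn_banach_closed_point hS.closure isClosed_closure hx
  refine ⟨{y | u < f y}, mem_nhdsWithin_of_mem_nhds ?_, ?_⟩
  · exact (isOpen_lt continuous_const f.continuous).mem_nhds hfx
  · simpa only [not_le] using ae_iff.1 (h f u fun s hs => hfS s (subset_closure hs))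

theorem ae_mem_closure_affine_image {E F : Type*} [AddCommGroup E] [Module ℝ E]
    [TopologicalSpace F] [AddCommGroup F] [Module ℝ F] [IsTopologicalAddGroup F]
    [ContinuousSMul ℝ F] [LocallyConvexSpace ℝ F] [SecondCountableTopology F]
    [MeasurableSpace F] {ν : Measure F} (i : E →ₗ[ℝ] F) (V : Submodule ℝ E) (p : E)
    (h : ∀ f : StrongDual ℝ F, (∀ m ∈ V, f (i m) = 0) → ∀ᵐ x ∂ν, f x = f (i p)) :
    ∀ᵐ x ∂ν, x ∈ closure ((fun m => i (p + m)) '' V) := by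
  have hconvex : Convex ℝ ((fun m => i (p + m)) '' V) := by
    have := (V.convex.vadd p).linear_image i
    rwa [← Set.image_vadd, Set.image_image] at this
  refine ae_mem_closure_of_forall_ae_le hconvex fun f u hfu => ?_
  have hbdd : BddAbove ((f.toLinearMap ∘ₗ i) '' V) := by
    refine ⟨u - f (i p), ?_⟩
    rintro _ ⟨m, hm, rfl⟩
    have hlt := hfu _ ⟨m, hm, rfl⟩
    simp only [map_add] at hlt
    simp only [LinearMap.coe_comp, ContinuousLinearMap.coe_coe, Function.comp_apply]
    linarith
  filter_upwards [h f fun m hm =>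
    (f.toLinearMap ∘ₗ i).eq_zero_of_bddAbove_image_submodule hbdd hm] with x hx
  exact hx ▸ (hfu _ ⟨0, V.zero_mem, by simp⟩).le

theorem measure_concentrated_on_closure_affine_subspace_general
    {H B : Type*}
    [NormedAddCommGroup H] [InnerProductSpace ℝ H]
    [NormedAddCommGroup B] [NormedSpace ℝ B]
    [TopologicalSpace.SeparableSpace B]
    [MeasurableSpace B] [BorelSpace B]
    (i : H →L[ℝ] B)
    (j : (B →L[ℝ] ℝ) → H)
    (hj : ∀ (L : B →L[ℝ] ℝ) (h : H), ⟪j L, h⟫ = L (i h))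
    (M₀ : Submodule ℝ H) [CompleteSpace M₀] (p : H)
    (ν : MeasureTheory.Measure B) [MeasureTheory.IsProbabilityMeasure ν]
    (hν : ∀ L : B →L[ℝ] ℝ,
      ∫ x, Complex.exp (Complex.I * (L x : ℂ)) ∂ν
        = Complex.exp (Complex.I * (⟪p, j L⟫ : ℝ)
            - (‖(M₀.orthogonalProjectionOnto (j L) : H)‖ ^ 2 : ℝ) / 2)) :
    ν (closure ((fun m : H => i (p + m)) '' (M₀ : Set H))) = 1 := by
  have hcharFunDual (L : B →L[ℝ] ℝ) (hL : j L ∈ M₀ᗮ) :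
      charFunDual ν L = cexp (L (i p) * I) := by
    simp_rw [charFunDual_apply, mul_comm _ I]
    rw [hν L, Submodule.orthogonalProjectionOnto_apply_of_mem_orthogonal hL, real_inner_comm, hj]
    simp
  have hae : ∀ᵐ x ∂ν, x ∈ closure ((fun m : H => i (p + m)) '' (M₀ : Set H)) := by
    refine ae_mem_closure_affine_image i.toLinearMap M₀ p fun f hf => ?_
    refine ae_eq_of_charFunDual_smul_eq f (f (i p)) fun t => ?_
    have hperp : j (t • f) ∈ M₀ᗮ := fun m hm => by
      rw [real_inner_comm, hj, smul_apply]
      exact smul_eq_zero_of_right t (hf m hm)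
    rw [hcharFunDual _ hperp]
    simp [mul_assoc]
  rw [← measure_univ (μ := ν)]
  exact (ae_iff_measure_eq isClosed_closure.measurableSet.nullMeasurableSet).1 hae

/-- A measure with the law `μ_{M_p}` is concentrated on the closure in `B`
of the affine subspace `i(p + M₀)`. -/
theorem measure_concentrated_on_closure_affine_subspace
    {H B : Type*}
    [NormedAddCommGroup H] [InnerProductSpace ℝ H] [CompleteSpace H]
    [TopologicalSpace.SeparableSpace H]
    [NormedAddCommGroup B] [NormedSpace ℝ B] [CompleteSpace B]
    [TopologicalSpace.SeparableSpace B]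
    [MeasurableSpace B] [BorelSpace B]
    (i : H →L[ℝ] B) (hi : Function.Injective i) (hiDense : DenseRange i)
    (j : (B →L[ℝ] ℝ) → H)
    (hj : ∀ (L : B →L[ℝ] ℝ) (h : H), ⟪j L, h⟫ = L (i h))
    (μ : MeasureTheory.Measure B) [MeasureTheory.IsProbabilityMeasure μ]
    (hμ : ∀ L : B →L[ℝ] ℝ,
      ∫ x, Complex.exp (Complex.I * (L x : ℂ)) ∂μ
        = Complex.exp (-(‖j L‖ ^ 2 : ℝ) / 2))
    (M₀ : Submodule ℝ H) [CompleteSpace M₀] (p : H) (hp : p ∈ M₀ᗮ)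
    (ν : MeasureTheory.Measure B) [MeasureTheory.IsProbabilityMeasure ν]
    (hν : ∀ L : B →L[ℝ] ℝ,
      ∫ x, Complex.exp (Complex.I * (L x : ℂ)) ∂ν
        = Complex.exp (Complex.I * (⟪p, j L⟫ : ℝ)
            - (‖(M₀.orthogonalProjectionOnto (j L) : H)‖ ^ 2 : ℝ) / 2)) :
    ν (closure ((fun m : H => i (p + m)) '' (M₀ : Set H))) = 1 :=
  measure_concentrated_on_closure_affine_subspace_general i j hj M₀ p ν hν
end

section
/- For every x* ∈ B*, ∫_{Q₀^⊥} (∫_B exp(i·x*(x)) dν_p(x)) dγ(p) = exp(−½‖j(x*)‖²); that is, the γ-average over p ∈ Q₀^⊥ of the characteristic functionals of the measures ν_p equals the characteristic functional of the Wiener measure μ. -/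
open MeasureTheory
open scoped RealInnerProductSpace

/-!
Split `j L = a + k` along `H = Q₀ ⊕ Q₀ᗮ`. For `p ∈ Q₀ᗮ` the phase `⟪p, j L⟫` only sees `k`, so
averaging the characteristic functional of `ν p` over `p ∼ γ` multiplies `exp (-‖a‖² / 2)` by the
Gaussian factor `exp (-‖k‖² / 2)`, and Pythagoras `‖j L‖² = ‖a‖² + ‖k‖²` gives the claim.
-/

theorem integral_exp_I_inner_sub {F : Type*} [NormedAddCommGroup F] [InnerProductSpace ℝ F]
    [MeasurableSpace F] {γ : Measure F}
    (hγ : ∀ k : F, ∫ p, Complex.exp (Complex.I * (⟪k, p⟫ : ℝ)) ∂γ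
        = Complex.exp (-(‖k‖ ^ 2 : ℝ) / 2))
    (k : F) (c : ℂ) :
    ∫ p, Complex.exp (Complex.I * (⟪k, p⟫ : ℝ) - c) ∂γ
      = Complex.exp (-c) * Complex.exp (-(‖k‖ ^ 2 : ℝ) / 2) := by
  simp_rw [sub_eq_neg_add, Complex.exp_add]
  rw [integral_const_mul, hγ]

theorem average_characteristic_functional_general
    {H B : Type*}
    [NormedAddCommGroup H] [InnerProductSpace ℝ H] [MeasurableSpace H]
    [NormedAddCommGroup B] [NormedSpace ℝ B] [MeasurableSpace B]
    (j : (B →L[ℝ] ℝ) → H)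
    (Q₀ : Submodule ℝ H) [CompleteSpace Q₀]
    (ν : ↥Q₀ᗮ → MeasureTheory.Measure B)
    (hν : ∀ (p : ↥Q₀ᗮ) (L : B →L[ℝ] ℝ),
      ∫ x, Complex.exp (Complex.I * (L x : ℂ)) ∂(ν p)
        = Complex.exp (Complex.I * (⟪(p : H), j L⟫ : ℝ)
            - (‖(Q₀.orthogonalProjection (j L) : H)‖ ^ 2 : ℝ) / 2))
    (γ : MeasureTheory.Measure ↥Q₀ᗮ)
    (hγ : ∀ k : ↥Q₀ᗮ, ∫ p, Complex.exp (Complex.I * (⟪k, p⟫ : ℝ)) ∂γ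
        = Complex.exp (-(‖k‖ ^ 2 : ℝ) / 2))
    (L : B →L[ℝ] ℝ) :
    ∫ p, (∫ x, Complex.exp (Complex.I * (L x : ℂ)) ∂(ν p)) ∂γ
      = Complex.exp (-(‖j L‖ ^ 2 : ℝ) / 2) := by
  set k := Q₀ᗮ.orthogonalProjectionOnto (j L)
  have hphase (p : ↥Q₀ᗮ) : ⟪(p : H), j L⟫ = ⟪k, p⟫ := by
    rw [real_inner_comm, Q₀ᗮ.inner_orthogonalProjectionOnto_eq_of_mem_right]
  simp_rw [hν, hphase]
  rw [integral_exp_I_inner_sub hγ, ← Complex.exp_add]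
  congr 1
  push_cast [Submodule.norm_coe, Submodule.norm_sq_eq_add_norm_sq_projection (j L) Q₀]
  ring

/-- The `γ`-average over `p ∈ Q₀ᗮ` of the characteristic functionals of
the measures `ν_p` is the characteristic functional of Wiener measure `μ`. -/
theorem average_characteristic_functional
    {H B : Type*}
    [NormedAddCommGroup H] [InnerProductSpace ℝ H] [CompleteSpace H]
    [TopologicalSpace.SeparableSpace H]
    [MeasurableSpace H] [BorelSpace H]
    [NormedAddCommGroup B] [NormedSpace ℝ B] [CompleteSpace B]
    [TopologicalSpace.SeparableSpace B]
    [MeasurableSpace B] [BorelSpace B]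
    (i : H →L[ℝ] B) (hi : Function.Injective i) (hiDense : DenseRange i)
    (j : (B →L[ℝ] ℝ) → H)
    (hj : ∀ (L : B →L[ℝ] ℝ) (h : H), ⟪j L, h⟫ = L (i h))
    (μ : MeasureTheory.Measure B) [MeasureTheory.IsProbabilityMeasure μ]
    (hμ : ∀ L : B →L[ℝ] ℝ,
      ∫ x, Complex.exp (Complex.I * (L x : ℂ)) ∂μ
        = Complex.exp (-(‖j L‖ ^ 2 : ℝ) / 2))
    (Q₀ : Submodule ℝ H) [CompleteSpace Q₀] [FiniteDimensional ℝ ↥Q₀ᗮ]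
    (ν : ↥Q₀ᗮ → MeasureTheory.Measure B)
    (hνprob : ∀ p : ↥Q₀ᗮ, MeasureTheory.IsProbabilityMeasure (ν p))
    (hν : ∀ (p : ↥Q₀ᗮ) (L : B →L[ℝ] ℝ),
      ∫ x, Complex.exp (Complex.I * (L x : ℂ)) ∂(ν p)
        = Complex.exp (Complex.I * (⟪(p : H), j L⟫ : ℝ)
            - (‖(Q₀.orthogonalProjection (j L) : H)‖ ^ 2 : ℝ) / 2))
    (γ : MeasureTheory.Measure ↥Q₀ᗮ) [MeasureTheory.IsProbabilityMeasure γ]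
    (hγ : ∀ k : ↥Q₀ᗮ, ∫ p, Complex.exp (Complex.I * (⟪k, p⟫ : ℝ)) ∂γ
        = Complex.exp (-(‖k‖ ^ 2 : ℝ) / 2))
    (L : B →L[ℝ] ℝ) :
    ∫ p, (∫ x, Complex.exp (Complex.I * (L x : ℂ)) ∂(ν p)) ∂γ
      = Complex.exp (-(‖j L‖ ^ 2 : ℝ) / 2) :=
  average_characteristic_functional_general j Q₀ ν hν γ hγ L
end
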